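/- The Jucys–Murphy elements y_1 := 1 and y_{k+1} := T_k ⋯ T_2 T_1² T_2 ⋯ T_k (1 ≤ k ≤ n-1) pairwise commute: y_i y_j = y_j y_i for all 1 ≤ i, j ≤ n. Moreover κ_j y_{j+1} y_j = y_j y_{j+1} κ_j = ν² κ_j for all 1 ≤ j ≤ n-1. -/

import Mathlib

/-!
Write `g = T_j`, `h = T_{j+1}`, `w = y_j`, so that `y_{j+1} = g w g` and `y_{j+2} = h y_{j+1} h`.
Since `h` commutes with `w`, the braid relation rewrites `y_{j+1} h y_{j+1}` as
`(g h) (w g w) (h g)`; this turns `y_j y_{j+1} = y_{j+1} y_j` into `y_{j+1} y_{j+2} = y_{j+2} y_{j+1}`,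
and `y_i` commutes with every `T_k`, `k > i`, hence with `y_j` for `j > i + 1`.

For the `κ` relations, the braid relation says that conjugation by `g h` and by `(h g)⁻¹` carries
`T_j` to `T_{j+1}`, hence `κ_j` to `κ_{j+1}`. With `κ_{j+1} g^{±1} κ_{j+1} = ν^{∓1} κ_{j+1}` this
gives `(g h) κ_j (h g) = κ_{j+1}`, and then `κ_j (y_j T_j y_j) = ν κ_j` (and its mirror image)
propagates from `j` to `j + 1`.
-/

/-- The BMW element `κ = 1 - (T - T⁻¹)/(q - q⁻¹)` attached to an invertible element `T`. -/
noncomputable def kap {A : Type*} [Ring A] [Algebra ℂ A] (q : ℂ) (x : Aˣ) : A :=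
  1 - (q - q⁻¹)⁻¹ • ((x : A) - ((x⁻¹ : Aˣ) : A))

/-- The Jucys–Murphy elements `y_1 = 1`, `y_{k+1} = T_k ⋯ T_2 T_1² T_2 ⋯ T_k`
(defined recursively by `y_{k+1} = T_k y_k T_k`). -/
def jmy {A : Type*} [Ring A] (T : ℕ → Aˣ) : ℕ → A
  | 0 => 1
  | 1 => 1
  | (k + 2) => (T (k + 1) : A) * jmy T (k + 1) * (T (k + 1) : A)

section Braid

variable {M : Type*} [Monoid M] {g h w : M}

theorem mul_mul_mul_eq_of_braid (hb : g * h * g = h * g * h) (hw : Commute h w) :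
    g * w * g * h * (g * w * g) = g * h * (w * g * w) * (h * g) := by
  calc g * w * g * h * (g * w * g) = g * w * (g * h * g) * w * g := by simp only [mul_assoc]
    _ = g * (w * h) * g * (h * w) * g := by rw [hb]; simp only [mul_assoc]
    _ = g * (h * w) * g * (w * h) * g := by rw [hw.eq]
    _ = g * h * (w * g * w) * (h * g) := by simp only [mul_assoc]

theorem commute_mul_mul_of_braid (hb : g * h * g = h * g * h) (hw : Commute h w)
    (hx : Commute w (g * w * g)) : Commute (g * w * g) (h * (g * w * g) * h) :=
  calc g * w * g * (h * (g * w * g) * h) = g * w * g * h * (g * w * g) * h := by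
        simp only [mul_assoc]
    _ = g * h * (w * g * w) * (h * g * h) := by
        rw [mul_mul_mul_eq_of_braid hb hw]; simp only [mul_assoc]
    _ = g * h * (w * (g * w * g)) * h * g := by rw [← hb]; simp only [mul_assoc]
    _ = h * g * h * (w * g * w) * (h * g) := by rw [hx.eq, ← hb]; simp only [mul_assoc]
    _ = h * (g * w * g * h * (g * w * g)) := by
        rw [mul_mul_mul_eq_of_braid hb hw]; simp only [mul_assoc]
    _ = h * (g * w * g) * h * (g * w * g) := by simp only [mul_assoc]

end Braid

section Algebra

variable {K A : Type*} [Field K] [Ring A] [Algebra K A]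

theorem Units.inv_mul_eq_inv_smul_of_mul_eq_smul {u : Aˣ} {a : A} {c : K} (hc : c ≠ 0)
    (h : (u : A) * a = c • a) : (↑u⁻¹ : A) * a = c⁻¹ • a := by
  rw [eq_inv_smul_iff₀ hc, ← mul_smul_comm, ← h, Units.inv_mul_cancel_left]

theorem mul_mul_mul_eq_of_semiconjBy {g h : Aˣ} {e f : A} {c : K} (hc : c ≠ 0)
    (hgh : SemiconjBy ((g : A) * h) e f) (hhg : SemiconjBy ((h : A) * g) f e)
    (hhf : (h : A) * f = c • f) (hfgf : f * g * f = c⁻¹ • f)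
    (hfg'f : f * (↑g⁻¹ : A) * f = c • f) :
    (g : A) * h * e * (h * g) = f := by
  have hghef : (g : A) * h * (e * f) = f :=
    calc (g : A) * h * (e * f) = f * (g * (h * f)) := by
          rw [← mul_assoc, hgh.eq]; simp only [mul_assoc]
      _ = c • c⁻¹ • f := by rw [hhf, mul_smul_comm, mul_smul_comm, ← mul_assoc, hfgf]
      _ = f := smul_inv_smul₀ hc f
  have hhgef : (↑(h * g)⁻¹ : A) * (e * f) = f :=
    calc (↑(h * g)⁻¹ : A) * (e * f) = f * g⁻¹ * (h⁻¹ * f) := by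
          rw [← mul_assoc, (hhg.units_inv_symm_left (a := h * g)).eq, mul_inv_rev, Units.val_mul]
          simp only [mul_assoc]
      _ = c⁻¹ • c • f := by
          rw [Units.inv_mul_eq_inv_smul_of_mul_eq_smul hc hhf, mul_smul_comm, hfg'f]
      _ = f := inv_smul_smul₀ hc f
  -- `g h` and `(h g)⁻¹` both send `e f` to `f`.
  have hef : e * f = h * g * f :=
    calc e * f = ↑(h * g) * (↑(h * g)⁻¹ * (e * f)) := (Units.mul_inv_cancel_left _ _).symm
      _ = h * g * f := by rw [hhgef, Units.val_mul]
  rw [mul_assoc _ e, ← hhg.eq, ← hef, hghef]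

theorem mul_eq_smul_of_semiconjBy_left {u v z e f : A} {c : K} (hs : SemiconjBy u e f)
    (hF : u * e * v = f) (he : e * z = c • e) : f * (u * z * v) = c • f := by
  calc f * (u * z * v) = f * u * z * v := by simp only [mul_assoc]
    _ = u * (e * z) * v := by rw [← hs.eq, mul_assoc u]
    _ = c • f := by rw [he, mul_smul_comm, smul_mul_assoc, hF]

theorem mul_eq_smul_of_semiconjBy_right {u v z e f : A} {c : K} (hs : SemiconjBy v f e)
    (hF : u * e * v = f) (he : z * e = c • e) : u * z * v * f = c • f := by
  calc u * z * v * f = u * z * (e * v) := by rw [mul_assoc _ v, hs.eq]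
    _ = u * (z * e) * v := by simp only [mul_assoc]
    _ = c • f := by rw [he, mul_smul_comm, smul_mul_assoc, hF]

end Algebra

theorem SemiconjBy.kap_right {A : Type*} [Ring A] [Algebra ℂ A] {u : A} {x y : Aˣ} (q : ℂ)
    (h : SemiconjBy u (x : A) y) : SemiconjBy u (kap q x) (kap q y) :=
  (SemiconjBy.one_right u).sub_right ((h.sub_right h.units_inv_right).smul_right _)

section JucysMurphy

variable {A : Type*} [Ring A] {T : ℕ → Aˣ}

theorem jmy_one : jmy T 1 = 1 := rfl

theorem jmy_succ {k : ℕ} (hk : 1 ≤ k) : jmy T (k + 1) = T k * jmy T k * T k := by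
  obtain ⟨k, rfl⟩ := Nat.exists_eq_add_of_le' hk
  rfl

theorem commute_jmy_of_commute {x : A} {k : ℕ} (hx : ∀ i, 1 ≤ i → i < k → Commute x (T i)) :
    Commute x (jmy T k) := by
  rcases Nat.eq_zero_or_pos k with rfl | hk
  · exact Commute.one_right x
  induction k, hk using Nat.le_induction with
  | base => exact Commute.one_right x
  | succ k hk ih =>
    have hxT := hx k hk k.lt_succ_self
    rw [jmy_succ hk]
    exact (hxT.mul_right (ih fun i hi hik => hx i hi (by omega))).mul_right hxT

theorem commute_jmy_jmy_succ {n : ℕ}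
    (hbraid : ∀ i, 1 ≤ i → i + 2 ≤ n →
      (T i : A) * (T (i + 1) : A) * (T i : A) = (T (i + 1) : A) * (T i : A) * (T (i + 1) : A))
    (hcomm : ∀ i j, 1 ≤ i → j + 1 ≤ n → i + 2 ≤ j → (T i : A) * (T j : A) = (T j : A) * (T i : A))
    {k : ℕ} (hk : 1 ≤ k) (hkn : k + 1 ≤ n) : Commute (jmy T k) (jmy T (k + 1)) := by
  induction k, hk using Nat.le_induction with
  | base => exact Commute.one_left _
  | succ k hk ih =>
    have hw : Commute (T (k + 1) : A) (jmy T k) :=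
      commute_jmy_of_commute fun i hi hik => (hcomm i (k + 1) hi hkn (by omega)).symm
    have hx := ih (by omega)
    rw [jmy_succ hk] at hx
    rw [jmy_succ (by omega : 1 ≤ k + 1), jmy_succ hk]
    exact commute_mul_mul_of_braid (hbraid k hk hkn) hw hx

theorem commute_jmy_jmy {n : ℕ}
    (hbraid : ∀ i, 1 ≤ i → i + 2 ≤ n →
      (T i : A) * (T (i + 1) : A) * (T i : A) = (T (i + 1) : A) * (T i : A) * (T (i + 1) : A))
    (hcomm : ∀ i j, 1 ≤ i → j + 1 ≤ n → i + 2 ≤ j → (T i : A) * (T j : A) = (T j : A) * (T i : A))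
    {i j : ℕ} (hi : 1 ≤ i) (hin : i ≤ n) (hj : 1 ≤ j) (hjn : j ≤ n) :
    Commute (jmy T i) (jmy T j) := by
  wlog hij : i ≤ j generalizing i j
  · exact (this hj hjn hi hin (by omega)).symm
  induction j, hij using Nat.le_induction with
  | base => exact Commute.refl _
  | succ j hij ih =>
    rcases hij.eq_or_lt with rfl | hij
    · exact commute_jmy_jmy_succ hbraid hcomm hi hjn
    have hT : Commute (jmy T i) (T j : A) :=
      (commute_jmy_of_commute fun l hl hli => (hcomm l j hl hjn (by omega)).symm).symm
    rw [jmy_succ (by omega)]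
    exact (hT.mul_right (ih (by omega) (by omega))).mul_right hT

theorem kap_jmy_T_jmy_eq_smul [Algebra ℂ A] {n : ℕ} {q ν : ℂ} (hν0 : ν ≠ 0)
    (hbraid : ∀ i, 1 ≤ i → i + 2 ≤ n →
      (T i : A) * (T (i + 1) : A) * (T i : A) = (T (i + 1) : A) * (T i : A) * (T (i + 1) : A))
    (hcomm : ∀ i j, 1 ≤ i → j + 1 ≤ n → i + 2 ≤ j → (T i : A) * (T j : A) = (T j : A) * (T i : A))
    (hκT : ∀ i, 1 ≤ i → i + 1 ≤ n →
      kap q (T i) * (T i : A) = ν • kap q (T i) ∧ (T i : A) * kap q (T i) = ν • kap q (T i))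
    (hκdown : ∀ i, 2 ≤ i → i + 1 ≤ n →
      kap q (T i) * (T (i - 1) : A) * kap q (T i) = ν⁻¹ • kap q (T i) ∧
      kap q (T i) * (((T (i - 1))⁻¹ : Aˣ) : A) * kap q (T i) = ν • kap q (T i))
    {j : ℕ} (hj : 1 ≤ j) (hjn : j + 1 ≤ n) :
    kap q (T j) * (jmy T j * T j * jmy T j) = ν • kap q (T j) ∧
      jmy T j * T j * jmy T j * kap q (T j) = ν • kap q (T j) := by
  induction j, hj using Nat.le_induction with
  | base => simpa [jmy_one] using hκT 1 le_rfl hjn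
  | succ k hk ih =>
    have hb := hbraid k hk hjn
    have hw : Commute (T (k + 1) : A) (jmy T k) :=
      commute_jmy_of_commute fun i hi hik => (hcomm i (k + 1) hi hjn (by omega)).symm
    have hgh : SemiconjBy ((T k : A) * T (k + 1)) (kap q (T k)) (kap q (T (k + 1))) :=
      SemiconjBy.kap_right q (hb.trans (mul_assoc _ _ _))
    have hhg : SemiconjBy ((T (k + 1) : A) * T k) (kap q (T (k + 1))) (kap q (T k)) :=
      SemiconjBy.kap_right q (hb.symm.trans (mul_assoc _ _ _))
    have hF := mul_mul_mul_eq_of_semiconjBy hν0 hgh hhg (hκT (k + 1) (by omega) hjn).2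
      (hκdown (k + 1) (by omega) hjn).1 (hκdown (k + 1) (by omega) hjn).2
    obtain ⟨hl, hr⟩ := ih (by omega)
    rw [jmy_succ hk, mul_mul_mul_eq_of_braid hb hw]
    exact ⟨mul_eq_smul_of_semiconjBy_left hgh hF hl, mul_eq_smul_of_semiconjBy_right hhg hF hr⟩

end JucysMurphy

theorem jmy_commute_general {A : Type*} [Ring A] [Algebra ℂ A] (n : ℕ)
    (q ν : ℂ) (hν0 : ν ≠ 0)
    (T : ℕ → Aˣ)
    (hbraid : ∀ i, 1 ≤ i → i + 2 ≤ n →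
      (T i : A) * (T (i + 1) : A) * (T i : A) = (T (i + 1) : A) * (T i : A) * (T (i + 1) : A))
    (hcomm : ∀ i j, 1 ≤ i → j + 1 ≤ n → i + 2 ≤ j → (T i : A) * (T j : A) = (T j : A) * (T i : A))
    (hκT : ∀ i, 1 ≤ i → i + 1 ≤ n →
      kap q (T i) * (T i : A) = ν • kap q (T i) ∧ (T i : A) * kap q (T i) = ν • kap q (T i))
    (hκdown : ∀ i, 2 ≤ i → i + 1 ≤ n →
      kap q (T i) * (T (i - 1) : A) * kap q (T i) = ν⁻¹ • kap q (T i) ∧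
      kap q (T i) * (((T (i - 1))⁻¹ : Aˣ) : A) * kap q (T i) = ν • kap q (T i)) :
    (∀ i j, 1 ≤ i → i ≤ n → 1 ≤ j → j ≤ n →
      jmy T i * jmy T j = jmy T j * jmy T i) ∧
    (∀ j, 1 ≤ j → j + 1 ≤ n →
      kap q (T j) * jmy T (j + 1) * jmy T j = (ν ^ 2) • kap q (T j) ∧
      jmy T j * jmy T (j + 1) * kap q (T j) = (ν ^ 2) • kap q (T j)) := by
  refine ⟨fun i j hi hin hj hjn => (commute_jmy_jmy hbraid hcomm hi hin hj hjn).eq,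
    fun j hj hjn => ?_⟩
  obtain ⟨hκTj, hTjκ⟩ := hκT j hj hjn
  obtain ⟨hl, hr⟩ := kap_jmy_T_jmy_eq_smul hν0 hbraid hcomm hκT hκdown hj hjn
  rw [jmy_succ hj]
  constructor
  · calc kap q (T j) * (T j * jmy T j * T j) * jmy T j
        = kap q (T j) * T j * (jmy T j * T j * jmy T j) := by simp only [mul_assoc]
      _ = ν ^ 2 • kap q (T j) := by rw [hκTj, smul_mul_assoc, hl, smul_smul, sq]
  · calc jmy T j * (T j * jmy T j * T j) * kap q (T j)
        = jmy T j * T j * jmy T j * (T j * kap q (T j)) := by simp only [mul_assoc]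
      _ = ν ^ 2 • kap q (T j) := by rw [hTjκ, mul_smul_comm, hr, smul_smul, sq]

/-- The Jucys–Murphy elements of the BMW algebra pairwise commute and satisfy
`κ_j y_{j+1} y_j = y_j y_{j+1} κ_j = ν² κ_j`. -/
theorem jmy_commute {A : Type*} [Ring A] [Algebra ℂ A] (n : ℕ) (hn : 3 ≤ n)
    (q ν : ℂ) (hq0 : q ≠ 0) (hν0 : ν ≠ 0) (hq1 : q ^ 2 ≠ 1)
    (T : ℕ → Aˣ)
    (hbraid : ∀ i, 1 ≤ i → i + 2 ≤ n →
      (T i : A) * (T (i + 1) : A) * (T i : A) = (T (i + 1) : A) * (T i : A) * (T (i + 1) : A))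
    (hcomm : ∀ i j, 1 ≤ i → j + 1 ≤ n → i + 2 ≤ j → (T i : A) * (T j : A) = (T j : A) * (T i : A))
    (hκT : ∀ i, 1 ≤ i → i + 1 ≤ n →
      kap q (T i) * (T i : A) = ν • kap q (T i) ∧ (T i : A) * kap q (T i) = ν • kap q (T i))
    (hκdown : ∀ i, 2 ≤ i → i + 1 ≤ n →
      kap q (T i) * (T (i - 1) : A) * kap q (T i) = ν⁻¹ • kap q (T i) ∧
      kap q (T i) * (((T (i - 1))⁻¹ : Aˣ) : A) * kap q (T i) = ν • kap q (T i))
    (hκup : ∀ i, 1 ≤ i → i + 2 ≤ n →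
      kap q (T i) * (T (i + 1) : A) * kap q (T i) = ν⁻¹ • kap q (T i) ∧
      kap q (T i) * (((T (i + 1))⁻¹ : Aˣ) : A) * kap q (T i) = ν • kap q (T i)) :
    (∀ i j, 1 ≤ i → i ≤ n → 1 ≤ j → j ≤ n →
      jmy T i * jmy T j = jmy T j * jmy T i) ∧
    (∀ j, 1 ≤ j → j + 1 ≤ n →
      kap q (T j) * jmy T (j + 1) * jmy T j = (ν ^ 2) • kap q (T j) ∧
      jmy T j * jmy T (j + 1) * kap q (T j) = (ν ^ 2) • kap q (T j)) :=
  jmy_commute_general n q ν hν0 T hbraid hcomm hκT hκdown
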